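/- (Guthrie–Nymann) The set T = { Σ_{i≥1} ( ε_{2i−1}·(3/4^i) + ε_{2i}·(2/4^i) ) : ε_n ∈ {0,1} for all n }, i.e. the achievement set of the sequence whose (2i−1)-st term is 3/4^i and whose (2i)-th term is 2/4^i, has nonempty interior but is not a finite union of closed intervals; hence T is a Cantorval. -/

import Mathlib

/-!
`T` is the achievement set of the positive summable sequence `3/4, 2/4, 3/16, 2/16, …`, so it is
compact and perfect. Splitting off the first two terms gives the self-similarity
`T = ⋃_{d ∈ {0, 2, 3, 5}} (d + T) / 4`. As `1` is not a digit, every `5/12 · 4⁻ⁿ ∈ T` is the left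
end of a gap `(5/12 · 4⁻ⁿ, 1/2 · 4⁻ⁿ)` of `T`; these infinitely many non-interior points rule out a
finite union of intervals. On the other hand `T ∪ (T + 1)` is invariant under the contractions
`y ↦ (e + y) / 4`, `e = 2, 3, 4, 5`, whose images of `[2/3, 5/3]` cover `[2/3, 5/3]`; hence
`[2/3, 5/3] ⊆ T ∪ (T + 1)`, and `(2/3, 1) ⊆ T` because `T ⊆ [0, 5/3]`.
-/

/-- `A` is a finite union of closed bounded intervals. -/
def IsFiniteUnionOfClosedIntervals (A : Set ℝ) : Prop :=
  ∃ s : Finset (ℝ × ℝ), A = ⋃ p ∈ s, Set.Icc p.1 p.2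

/-- A Cantorval: a nonempty compact perfect subset of `ℝ` with nonempty interior which is
not a finite union of closed intervals. -/
def IsCantorval (A : Set ℝ) : Prop :=
  A.Nonempty ∧ IsCompact A ∧ Perfect A ∧ (interior A).Nonempty ∧
    ¬ IsFiniteUnionOfClosedIntervals A

/-- The Guthrie–Nymann set `T`: the achievement set of the sequence whose `(2i-1)`-st term is
`3/4^i` and whose `(2i)`-th term is `2/4^i`. -/
def guthrieNymannSet : Set ℝ :=
  {s : ℝ | ∃ ε : ℕ → ℝ, (∀ n, ε n = 0 ∨ ε n = 1) ∧
    s = ∑' i : ℕ, (ε (2 * i) * (3 / 4 ^ (i + 1)) + ε (2 * i + 1) * (2 / 4 ^ (i + 1)))}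

open Set Filter Topology
open scoped NNReal

theorem IsClosed.subset_of_subset_iUnion_image {X ι : Type*} [MetricSpace X] {S I : Set X}
    {f : ι → X → X} {K : ℝ≥0} (hS : IsClosed S) (hSne : S.Nonempty) (hI : Bornology.IsBounded I)
    (hK : K < 1) (hf : ∀ i, LipschitzWith K (f i)) (hmaps : ∀ i, MapsTo (f i) S S)
    (hcover : I ⊆ ⋃ i, f i '' I) : I ⊆ S := by
  obtain ⟨s, hs⟩ := hSne
  obtain ⟨C, hC⟩ := hI.subset_closedBall s
  have approx : ∀ n : ℕ, ∀ y ∈ I, ∃ z ∈ S, dist y z ≤ K ^ n * C := by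
    intro n
    induction n with
    | zero => exact fun y hy => ⟨s, hs, by simpa using hC hy⟩
    | succ n ih =>
      intro y hy
      obtain ⟨i, y', hy', rfl⟩ := mem_iUnion.mp (hcover hy)
      obtain ⟨z, hz, hdist⟩ := ih y' hy'
      refine ⟨f i z, hmaps i hz, ?_⟩
      calc dist (f i y') (f i z) ≤ K * dist y' z := (hf i).dist_le_mul y' z
        _ ≤ K * (K ^ n * C) := by gcongr
        _ = K ^ (n + 1) * C := by ring
  have hlim : Tendsto (fun n => (K : ℝ) ^ n * C) atTop (𝓝 0) := by
    simpa using (tendsto_pow_atTop_nhds_zero_of_lt_one K.2 hK).mul_const C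
  intro y hy
  rw [← hS.closure_eq, Metric.mem_closure_iff]
  intro δ hδ
  obtain ⟨n, hn⟩ := (hlim.eventually (gt_mem_nhds hδ)).exists
  obtain ⟨z, hz, hdist⟩ := approx n y hy
  exact ⟨z, hz, hdist.trans_lt hn⟩

theorem notMem_interior_of_disjoint_Ioo {A : Set ℝ} {a b : ℝ} (hab : a < b)
    (h : Disjoint A (Ioo a b)) : a ∉ interior A := fun ha =>
  have hmem : A ∩ Ioo a b ∈ 𝓝[>] a :=
    inter_mem (nhdsWithin_le_nhds (mem_interior_iff_mem_nhds.mp ha)) (Ioo_mem_nhdsGT hab)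
  (Filter.nonempty_of_mem hmem).ne_empty h.inter_eq

theorem IsFiniteUnionOfClosedIntervals.finite_diff_interior {A : Set ℝ}
    (hA : IsFiniteUnionOfClosedIntervals A) : (A \ interior A).Finite := by
  obtain ⟨s, rfl⟩ := hA
  refine ((s.finite_toSet.image Prod.fst).union (s.finite_toSet.image Prod.snd)).subset ?_
  rintro x ⟨hx, hxint⟩
  obtain ⟨p, hp, hxp⟩ := mem_iUnion₂.mp hx
  by_contra hend
  have hxIoo : x ∈ Ioo p.1 p.2 := by
    rw [← Icc_sdiff_both]
    refine ⟨hxp, ?_⟩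
    rintro (h | h)
    exacts [hend (Or.inl ⟨p, hp, h.symm⟩), hend (Or.inr ⟨p, hp, h.symm⟩)]
  refine hxint (mem_interior_iff_mem_nhds.mpr (mem_of_superset (isOpen_Ioo.mem_nhds hxIoo) ?_))
  exact fun z hz => mem_iUnion₂.mpr ⟨p, hp, Ioo_subset_Icc_self hz⟩

def binarySequences : Set (ℕ → ℝ) := {ε | ∀ n, ε n = 0 ∨ ε n = 1}

def achievementSet (x : ℕ → ℝ) : Set ℝ :=
  (fun ε : ℕ → ℝ => ∑' n, ε n * x n) '' binarySequences

section AchievementSet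

variable {x : ℕ → ℝ}

theorem abs_mul_le_of_mem_binarySequences {ε : ℕ → ℝ} (hε : ε ∈ binarySequences) (n : ℕ) :
    |ε n * x n| ≤ |x n| := by
  rcases hε n with h | h <;> simp [h]

theorem summable_mul_of_mem_binarySequences (hx : Summable x) {ε : ℕ → ℝ}
    (hε : ε ∈ binarySequences) : Summable fun n => ε n * x n :=
  hx.abs.of_norm_bounded (abs_mul_le_of_mem_binarySequences hε)

theorem zero_mem_achievementSet : (0 : ℝ) ∈ achievementSet x :=
  ⟨0, fun _ => by simp, by simp⟩

theorem tsum_mem_achievementSet : ∑' n, x n ∈ achievementSet x :=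
  ⟨1, fun _ => by simp, by simp⟩

theorem achievementSet_subset_Icc (hx : Summable x) (hx0 : ∀ n, 0 ≤ x n) :
    achievementSet x ⊆ Icc 0 (∑' n, x n) := by
  rintro _ ⟨ε, hε, rfl⟩
  have hterm : ∀ n, 0 ≤ ε n * x n ∧ ε n * x n ≤ x n := fun n => by
    rcases hε n with h | h <;> simp [h, hx0 n]
  exact ⟨tsum_nonneg fun n => (hterm n).1,
    (summable_mul_of_mem_binarySequences hx hε).tsum_le_tsum (fun n => (hterm n).2) hx⟩

theorem isCompact_achievementSet (hx : Summable x) : IsCompact (achievementSet x) := by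
  have hcompact : IsCompact binarySequences := by
    convert isCompact_univ_pi fun _ : ℕ => (toFinite ({0, 1} : Set ℝ)).isCompact
    ext ε
    simp [binarySequences]
  refine hcompact.image_of_continuousOn ?_
  refine continuousOn_tsum (fun n => ((continuous_apply n).mul continuous_const).continuousOn)
    hx.abs fun n ε hε => abs_mul_le_of_mem_binarySequences hε n

theorem achievementSet_const_mul (c : ℝ) :
    achievementSet (fun n => c * x n) = (c * ·) '' achievementSet x := by
  rw [achievementSet, achievementSet, image_image]
  refine image_congr fun ε _ => ?_
  simp only [mul_left_comm _ c, tsum_mul_left]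

theorem perfect_achievementSet (hx : Summable x) (hx0 : ∀ n, x n ≠ 0) :
    Perfect (achievementSet x) := by
  refine ⟨(isCompact_achievementSet hx).isClosed, ?_⟩
  rintro _ ⟨ε, hε, rfl⟩
  have hsum := (summable_mul_of_mem_binarySequences hx hε).hasSum
  -- Flipping the `m`-th coefficient moves the sum by `±x m`, which is nonzero and tends to `0`.
  have hflip : ∀ m, HasSum (fun n => Function.update ε m (1 - ε m) n * x n)
      ((1 - 2 * ε m) * x m + ∑' n, ε n * x n) := fun m => by
    have hfun : (fun n => Function.update ε m (1 - ε m) n * x n) =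
        Function.update (fun n => ε n * x n) m ((1 - ε m) * x m) := by
      ext n
      rcases eq_or_ne n m with rfl | h <;> simp [*]
    rw [hfun, show (1 - 2 * ε m) * x m = (1 - ε m) * x m - ε m * x m by ring]
    exact hsum.update m _
  have hflip_mem : ∀ m, Function.update ε m (1 - ε m) ∈ binarySequences := fun m n => by
    rcases eq_or_ne n m with rfl | h
    · rcases hε n with h | h <;> simp [h]
    · simpa [Function.update_of_ne h] using hε n
  have habs : ∀ m, |(1 - 2 * ε m) * x m| = |x m| := fun m => by
    rcases hε m with h | h <;> norm_num [h, abs_mul]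
  have hδ : Tendsto (fun m => (1 - 2 * ε m) * x m) atTop (𝓝 0) :=
    squeeze_zero_norm (fun m => (habs m).le) (by simpa using hx.tendsto_atTop_zero.abs)
  have htend := (hδ.add_const (∑' n, ε n * x n)).congr fun m => (hflip m).tsum_eq.symm
  rw [zero_add] at htend
  refine accPt_iff_frequently.mpr (htend.frequently (Frequently.of_forall fun m => ⟨?_, ?_⟩))
  · rw [(hflip m).tsum_eq, Ne, add_eq_right, ← abs_eq_zero, habs, abs_eq_zero]
    exact hx0 m
  · exact ⟨_, hflip_mem m, rfl⟩

theorem mem_achievementSet_iff_cons (hx : Summable x) {s : ℝ} :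
    s ∈ achievementSet x ↔
      ∃ a : ℝ, (a = 0 ∨ a = 1) ∧ ∃ t ∈ achievementSet (fun n => x (n + 1)), s = a * x 0 + t := by
  constructor
  · rintro ⟨ε, hε, rfl⟩
    refine ⟨ε 0, hε 0, _, ⟨fun n => ε (n + 1), fun n => hε (n + 1), rfl⟩, ?_⟩
    exact (summable_mul_of_mem_binarySequences hx hε).tsum_eq_zero_add
  · rintro ⟨a, ha, _, ⟨ε, hε, rfl⟩, rfl⟩
    have hcons : (fun n : ℕ => Nat.casesOn n a ε : ℕ → ℝ) ∈ binarySequences := by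
      rintro (_ | n)
      exacts [ha, hε n]
    exact ⟨_, hcons, (summable_mul_of_mem_binarySequences hx hcons).tsum_eq_zero_add⟩

end AchievementSet

noncomputable def guthrieNymannSeq (n : ℕ) : ℝ := (if Even n then 3 else 2) / 4 ^ (n / 2 + 1)

theorem guthrieNymannSeq_two_mul (i : ℕ) : guthrieNymannSeq (2 * i) = 3 / 4 ^ (i + 1) := by
  simp [guthrieNymannSeq]

theorem guthrieNymannSeq_two_mul_add_one (i : ℕ) :
    guthrieNymannSeq (2 * i + 1) = 2 / 4 ^ (i + 1) := by
  simp [guthrieNymannSeq, show (2 * i + 1) / 2 = i by omega]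

theorem guthrieNymannSeq_add_two (n : ℕ) :
    guthrieNymannSeq (n + 2) = 4⁻¹ * guthrieNymannSeq n := by
  simp only [guthrieNymannSeq, Nat.even_add, even_two, iff_true, Nat.add_div_right n two_pos]
  ring

theorem guthrieNymannSeq_pos (n : ℕ) : 0 < guthrieNymannSeq n := by
  unfold guthrieNymannSeq
  split_ifs <;> positivity

theorem hasSum_div_four_pow_succ (c : ℝ) : HasSum (fun i : ℕ => c / 4 ^ (i + 1)) (c / 3) := by
  have hfun : (fun i : ℕ => c / 4 ^ (i + 1)) = fun i => c / 4 * 4⁻¹ ^ i := by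
    ext i
    rw [pow_succ, inv_pow]
    field_simp
  rw [hfun, show c / 3 = c / 4 * (1 - 4⁻¹)⁻¹ by norm_num; ring]
  exact (hasSum_geometric_of_lt_one (by norm_num) (by norm_num)).mul_left (c / 4)

theorem hasSum_guthrieNymannSeq : HasSum guthrieNymannSeq (5 / 3) := by
  have he : HasSum (fun i => guthrieNymannSeq (2 * i)) (3 / 3) := by
    simpa only [guthrieNymannSeq_two_mul] using hasSum_div_four_pow_succ 3
  have ho : HasSum (fun i => guthrieNymannSeq (2 * i + 1)) (2 / 3) := by
    simpa only [guthrieNymannSeq_two_mul_add_one] using hasSum_div_four_pow_succ 2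
  convert he.even_add_odd ho using 1
  norm_num

theorem tsum_mul_guthrieNymannSeq {ε : ℕ → ℝ} (hε : ε ∈ binarySequences) :
    ∑' n, ε n * guthrieNymannSeq n =
      ∑' i, (ε (2 * i) * (3 / 4 ^ (i + 1)) + ε (2 * i + 1) * (2 / 4 ^ (i + 1))) := by
  have hs := summable_mul_of_mem_binarySequences hasSum_guthrieNymannSeq.summable hε
  have he : Summable fun i => ε (2 * i) * guthrieNymannSeq (2 * i) :=
    hs.comp_injective (i := fun i => 2 * i) fun _ _ h => by simpa using h
  have ho : Summable fun i => ε (2 * i + 1) * guthrieNymannSeq (2 * i + 1) :=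
    hs.comp_injective (i := fun i => 2 * i + 1) fun _ _ h => by simp only at h; omega
  rw [← tsum_even_add_odd (f := fun n => ε n * guthrieNymannSeq n) he ho, ← he.tsum_add ho]
  simp only [guthrieNymannSeq_two_mul, guthrieNymannSeq_two_mul_add_one]

theorem guthrieNymannSet_eq_achievementSet :
    guthrieNymannSet = achievementSet guthrieNymannSeq := by
  ext s
  constructor <;> rintro ⟨ε, hε, rfl⟩ <;> exact ⟨ε, hε, tsum_mul_guthrieNymannSeq hε⟩

theorem mem_guthrieNymannSet_iff {s : ℝ} :
    s ∈ guthrieNymannSet ↔ ∃ a b : ℝ, (a = 0 ∨ a = 1) ∧ (b = 0 ∨ b = 1) ∧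
      ∃ t ∈ guthrieNymannSet, s = (3 * a + 2 * b + t) / 4 := by
  have hsummable := hasSum_guthrieNymannSeq.summable
  have hshift : achievementSet (fun n => guthrieNymannSeq (n + 1 + 1)) =
      (4⁻¹ * ·) '' achievementSet guthrieNymannSeq := by
    simp only [guthrieNymannSeq_add_two]
    exact achievementSet_const_mul _
  have h0 : guthrieNymannSeq 0 = 3 / 4 := by norm_num [guthrieNymannSeq]
  have h1 : guthrieNymannSeq 1 = 2 / 4 := by norm_num [guthrieNymannSeq]
  rw [guthrieNymannSet_eq_achievementSet, mem_achievementSet_iff_cons hsummable]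
  simp only [mem_achievementSet_iff_cons ((summable_nat_add_iff 1).mpr hsummable), hshift, h0, h1]
  constructor
  · rintro ⟨a, ha, _, ⟨b, hb, _, ⟨t, ht, rfl⟩, rfl⟩, rfl⟩
    exact ⟨a, b, ha, hb, t, ht, by ring⟩
  · rintro ⟨a, b, ha, hb, t, ht, rfl⟩
    exact ⟨a, ha, _, ⟨b, hb, _, ⟨t, ht, rfl⟩, rfl⟩, by ring⟩

theorem isCompact_guthrieNymannSet : IsCompact guthrieNymannSet :=
  guthrieNymannSet_eq_achievementSet ▸ isCompact_achievementSet hasSum_guthrieNymannSeq.summable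

theorem perfect_guthrieNymannSet : Perfect guthrieNymannSet :=
  guthrieNymannSet_eq_achievementSet ▸ perfect_achievementSet hasSum_guthrieNymannSeq.summable
    fun n => (guthrieNymannSeq_pos n).ne'

theorem zero_mem_guthrieNymannSet : (0 : ℝ) ∈ guthrieNymannSet :=
  guthrieNymannSet_eq_achievementSet ▸ zero_mem_achievementSet

theorem five_div_three_mem_guthrieNymannSet : (5 / 3 : ℝ) ∈ guthrieNymannSet := by
  rw [guthrieNymannSet_eq_achievementSet, ← hasSum_guthrieNymannSeq.tsum_eq]
  exact tsum_mem_achievementSet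

theorem guthrieNymannSet_subset_Icc : guthrieNymannSet ⊆ Icc 0 (5 / 3) := by
  rw [guthrieNymannSet_eq_achievementSet, ← hasSum_guthrieNymannSeq.tsum_eq]
  exact achievementSet_subset_Icc hasSum_guthrieNymannSeq.summable
    fun n => (guthrieNymannSeq_pos n).le

theorem five_div_twelve_div_four_pow_mem_guthrieNymannSet (n : ℕ) :
    (5 / 12 / 4 ^ n : ℝ) ∈ guthrieNymannSet := by
  induction n with
  | zero =>
    exact mem_guthrieNymannSet_iff.mpr
      ⟨0, 0, .inl rfl, .inl rfl, _, five_div_three_mem_guthrieNymannSet, by norm_num⟩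
  | succ n ih =>
    exact mem_guthrieNymannSet_iff.mpr ⟨0, 0, .inl rfl, .inl rfl, _, ih, by ring⟩

theorem mul_four_mem_guthrieNymannSet_of_lt {s : ℝ} (hs : s ∈ guthrieNymannSet) (h : s < 1 / 2) :
    4 * s ∈ guthrieNymannSet := by
  obtain ⟨a, b, ha, hb, t, ht, rfl⟩ := mem_guthrieNymannSet_iff.mp hs
  have ht0 := (guthrieNymannSet_subset_Icc ht).1
  rcases ha with rfl | rfl <;> rcases hb with rfl | rfl
  · convert ht using 1
    ring
  all_goals linarith

theorem disjoint_guthrieNymannSet_Ioo (n : ℕ) :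
    Disjoint guthrieNymannSet (Ioo (5 / 12 / 4 ^ n) (1 / 2 / 4 ^ n)) := by
  induction n with
  | zero =>
    refine disjoint_left.mpr fun s hs hgap => ?_
    have h4s := (guthrieNymannSet_subset_Icc (mul_four_mem_guthrieNymannSet_of_lt hs
      (by simpa using hgap.2))).2
    norm_num at hgap
    linarith [hgap.1]
  | succ n ih =>
    refine disjoint_left.mpr fun s hs ⟨hlo, hhi⟩ => ?_
    rw [pow_succ, ← div_div] at hlo hhi
    have hle : (1 / 2 / 4 ^ n : ℝ) ≤ 1 / 2 := div_le_self (by norm_num) (one_le_pow₀ (by norm_num))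
    exact disjoint_left.mp ih (mul_four_mem_guthrieNymannSet_of_lt hs (by linarith))
      ⟨by linarith, by linarith⟩

theorem infinite_guthrieNymannSet_diff_interior :
    (guthrieNymannSet \ interior guthrieNymannSet).Infinite := by
  have hanti : StrictAnti fun n : ℕ => (5 / 12 / 4 ^ n : ℝ) := fun _ _ hmn =>
    div_lt_div_of_pos_left (by norm_num) (by positivity) (pow_lt_pow_right₀ (by norm_num) hmn)
  refine (infinite_range_of_injective hanti.injective).mono ?_
  rintro _ ⟨n, rfl⟩
  refine ⟨five_div_twelve_div_four_pow_mem_guthrieNymannSet n,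
    notMem_interior_of_disjoint_Ioo ?_ (disjoint_guthrieNymannSet_Ioo n)⟩
  exact div_lt_div_of_pos_right (by norm_num) (by positivity)

theorem mapsTo_add_div_four {e : ℝ} (he : e ∈ ({2, 3, 4, 5} : Set ℝ)) :
    MapsTo (fun y => (e + y) / 4) {y | y ∈ guthrieNymannSet ∨ y - 1 ∈ guthrieNymannSet}
      {y | y ∈ guthrieNymannSet ∨ y - 1 ∈ guthrieNymannSet} := by
  -- `e + c` with `c ∈ {0, 1}` ranges over `{2, …, 6} ⊆ {0, 2, 3, 5} ∪ (4 + {0, 2, 3, 5})`.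
  rintro y (hy | hy) <;> rcases he with rfl | rfl | rfl | rfl
  · exact Or.inl (mem_guthrieNymannSet_iff.mpr ⟨0, 1, .inl rfl, .inr rfl, y, hy, by ring⟩)
  · exact Or.inl (mem_guthrieNymannSet_iff.mpr ⟨1, 0, .inr rfl, .inl rfl, y, hy, by ring⟩)
  · exact Or.inr (mem_guthrieNymannSet_iff.mpr ⟨0, 0, .inl rfl, .inl rfl, y, hy, by ring⟩)
  · exact Or.inl (mem_guthrieNymannSet_iff.mpr ⟨1, 1, .inr rfl, .inr rfl, y, hy, by ring⟩)
  · exact Or.inl (mem_guthrieNymannSet_iff.mpr ⟨1, 0, .inr rfl, .inl rfl, y - 1, hy, by ring⟩)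
  · exact Or.inr (mem_guthrieNymannSet_iff.mpr ⟨0, 0, .inl rfl, .inl rfl, y - 1, hy, by ring⟩)
  · exact Or.inl (mem_guthrieNymannSet_iff.mpr ⟨1, 1, .inr rfl, .inr rfl, y - 1, hy, by ring⟩)
  · exact Or.inr (mem_guthrieNymannSet_iff.mpr ⟨0, 1, .inl rfl, .inr rfl, y - 1, hy, by ring⟩)

theorem Icc_subset_guthrieNymannSet_union :
    Icc (2 / 3) (5 / 3) ⊆ {y | y ∈ guthrieNymannSet ∨ y - 1 ∈ guthrieNymannSet} := by
  refine IsClosed.subset_of_subset_iUnion_image (ι := ({2, 3, 4, 5} : Set ℝ))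
    (f := fun e y => (e + y) / 4) (K := 4⁻¹) ?_ ⟨0, .inl zero_mem_guthrieNymannSet⟩
    (Metric.isBounded_Icc _ _) (by norm_num) (fun e => ?_) (fun e => mapsTo_add_div_four e.2) ?_
  · exact isCompact_guthrieNymannSet.isClosed.union
      (isCompact_guthrieNymannSet.isClosed.preimage (continuous_sub_right 1))
  · refine LipschitzWith.of_dist_le_mul fun y z => ?_
    rw [Real.dist_eq, Real.dist_eq, show (e + y) / 4 - (e + z) / 4 = 4⁻¹ * (y - z) by ring,
      abs_mul]
    norm_num
  · rintro y ⟨hy₁, hy₂⟩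
    have piece : ∀ e ∈ ({2, 3, 4, 5} : Set ℝ), (e + 2 / 3) / 4 ≤ y → y ≤ (e + 5 / 3) / 4 →
        y ∈ ⋃ i : ({2, 3, 4, 5} : Set ℝ), (fun y => ((i : ℝ) + y) / 4) '' Icc (2 / 3) (5 / 3) :=
      fun e he h₁ h₂ => mem_iUnion.mpr ⟨⟨e, he⟩, 4 * y - e, ⟨by linarith, by linarith⟩, by ring⟩
    by_cases h₁ : y ≤ 11 / 12
    · exact piece 2 (by simp) (by linarith) (by linarith)
    by_cases h₂ : y ≤ 7 / 6
    · exact piece 3 (by simp) (by linarith) (by linarith)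
    by_cases h₃ : y ≤ 17 / 12
    · exact piece 4 (by simp) (by linarith) (by linarith)
    · exact piece 5 (by simp) (by linarith) (by linarith)

theorem Ioo_subset_guthrieNymannSet : Ioo (2 / 3) 1 ⊆ guthrieNymannSet := fun y hy =>
  (Icc_subset_guthrieNymannSet_union ⟨hy.1.le, by linarith [hy.2]⟩).resolve_right fun h =>
    (guthrieNymannSet_subset_Icc h).1.not_gt (by linarith [hy.2])

/-- (Guthrie–Nymann) The set `T` has nonempty interior but is not a finite union of closed
intervals; hence `T` is a Cantorval. -/
theorem guthrieNymannSet_isCantorval :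
    (interior guthrieNymannSet).Nonempty ∧
    ¬ IsFiniteUnionOfClosedIntervals guthrieNymannSet ∧
    IsCantorval guthrieNymannSet := by
  have hinterior : (interior guthrieNymannSet).Nonempty :=
    ⟨3 / 4, interior_maximal Ioo_subset_guthrieNymannSet isOpen_Ioo (by norm_num)⟩
  have hnot : ¬ IsFiniteUnionOfClosedIntervals guthrieNymannSet := fun h =>
    infinite_guthrieNymannSet_diff_interior h.finite_diff_interior
  exact ⟨hinterior, hnot, ⟨0, zero_mem_guthrieNymannSet⟩, isCompact_guthrieNymannSet,
    perfect_guthrieNymannSet, hinterior, hnot⟩
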